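/- Let p be a prime, n, k positive integers, q = p^n. The linearized polynomial L(x) = x^{p^{2k}} + γ·x with γ ∈ F_q^* is a bijection of F_q if and only if (-1)^{n/e} · γ^{(p^n - 1)/(p^e - 1)} ≠ 1, where e = gcd(n, 2k). -/
import Mathlib

private theorem myGcdPow (a : ℕ) (ha : 2 ≤ a) :
    ∀ m n : ℕ, Nat.gcd (a ^ m - 1) (a ^ n - 1) = a ^ (Nat.gcd m n) - 1 := by
  intro m
  induction m using Nat.strong_induction_on with
  | _ m ih =>
    intro n
    rcases Nat.eq_zero_or_pos m with rfl | hm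
    · simp
    · rw [Nat.gcd_rec m n]
      have hA : a ≤ a ^ m := Nat.le_self_pow (by omega) a
      have key : a ^ n - 1 = (a ^ (n % m) - 1) + (a ^ m - 1) * ((a ^ (n % m)) * ((a ^ (m * (n / m)) - 1) / (a ^ m - 1))) := by
        have hd : (a ^ m - 1) ∣ (a ^ (m * (n / m)) - 1) := by
          have := Nat.sub_dvd_pow_sub_pow (a ^ m) 1 (n / m)
          simpa [← pow_mul] using this
        obtain ⟨t, ht⟩ := hd
        have h2 : 1 ≤ a ^ (n % m) := Nat.one_le_pow _ _ (by omega)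
        have h3 : 1 ≤ a ^ (m * (n / m)) := Nat.one_le_pow _ _ (by omega)
        have h4 : 1 ≤ a ^ n := Nat.one_le_pow _ _ (by omega)
        have hn : a ^ n = a ^ (m * (n / m)) * a ^ (n % m) := by
          rw [← pow_add, Nat.div_add_mod]
        rw [ht, Nat.mul_div_cancel_left _ (by omega : 0 < a ^ m - 1)]
        zify [h2, h3, h4, hA, ha] at ht hn ⊢
        linear_combination (a ^ (n % m) : ℤ) * ht + hn
      rw [key, Nat.gcd_add_mul_left_right, Nat.gcd_comm,
        ih (n % m) (Nat.mod_lt n hm) m, Nat.gcd_comm]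

private theorem myCyclicPow {G : Type*} [CommGroup G] [Fintype G] [IsCyclic G] (m : ℕ)
    (hm : 0 < m) (c : G) :
    (∃ y : G, y ^ m = c) ↔ c ^ (Fintype.card G / Nat.gcd m (Fintype.card G)) = 1 := by
  obtain ⟨g, hg⟩ := IsCyclic.exists_generator (α := G)
  set N := Fintype.card G with hN
  have hN0 : 0 < N := Fintype.card_pos
  set d := Nat.gcd m N with hd
  have hd0 : 0 < d := Nat.gcd_pos_of_pos_left _ hm
  have hdN : d ∣ N := Nat.gcd_dvd_right _ _
  have hdm : d ∣ m := Nat.gcd_dvd_left _ _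
  have hordg : orderOf g = N := by
    rw [hN, ← Nat.card_eq_fintype_card]
    exact orderOf_eq_card_of_forall_mem_zpowers hg
  constructor
  · rintro ⟨y, rfl⟩
    rw [← pow_mul]
    have : m * (N / d) = (m / d) * N := by
      rcases hdN with ⟨u, hu⟩; rcases hdm with ⟨v, hv⟩
      rw [hu, hv, Nat.mul_div_cancel_left _ hd0, Nat.mul_div_cancel_left _ hd0]
      ring
    rw [this, pow_mul, pow_card_eq_one]
  · intro hc
    obtain ⟨t, rfl⟩ : c ∈ Submonoid.powers g := mem_powers_iff_mem_zpowers.2 (hg c)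
    dsimp only at hc ⊢
    have hgp : g ^ (t * (N / d)) = 1 := by rw [pow_mul]; exact hc
    have hN1 : N ∣ t * (N / d) := by
      have := orderOf_dvd_of_pow_eq_one hgp
      rwa [hordg] at this
    have hdt : d ∣ t := by
      rcases hdN with ⟨u, hu⟩
      have hu' : N / d = u := by rw [hu, Nat.mul_div_cancel_left _ hd0]
      have hu0 : 0 < u := by
        rcases Nat.eq_zero_or_pos u with rfl | h
        · omega
        · exact h
      rw [hu', hu] at hN1
      exact (Nat.mul_dvd_mul_iff_right hu0).mp hN1
    set u : ℤ := Nat.gcdA m N with hu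
    set v : ℤ := Nat.gcdB m N with hv
    have hbez : (d : ℤ) = m * u + N * v := Nat.gcd_eq_gcd_ab m N
    refine ⟨g ^ (u * (t / d : ℕ)), ?_⟩
    have hgN : g ^ (N : ℤ) = 1 := by rw [zpow_natCast]; exact pow_card_eq_one
    have htd : (t : ℤ) = (d : ℤ) * ((t / d : ℕ) : ℤ) := by
      rcases hdt with ⟨w, hw⟩
      rw [hw, Nat.mul_div_cancel_left _ hd0]
      push_cast; ring
    calc (g ^ (u * (t / d : ℕ)) : G) ^ m
        = g ^ (u * (t / d : ℕ) * m) := by rw [← zpow_natCast (g ^ _) m, ← zpow_mul]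
      _ = g ^ ((t : ℤ)) * (g ^ (N : ℤ)) ^ (- (v * (t / d : ℕ))) := by
          rw [← zpow_mul, ← zpow_add]
          congr 1
          have h5 : (t : ℤ) + (N : ℤ) * (- (v * (t / d : ℕ))) = ((d:ℤ) - N * v) * ((t / d : ℕ) : ℤ) := by
            rw [htd]; ring
          have h6 : (d : ℤ) - N * v = m * u := by rw [hbez]; ring
          rw [h5, h6]; ring
      _ = g ^ t := by rw [hgN, one_zpow, mul_one, zpow_natCast]

private theorem myGeom (b : ℕ) (hb : 1 ≤ b) :
    ∀ r : ℕ, (b - 1) * (∑ i ∈ Finset.range r, b ^ i) = b ^ r - 1 := by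
  intro r
  induction r with
  | zero => simp
  | succ r ih =>
    rw [Finset.sum_range_succ, Nat.mul_add, ih]
    have h1 : 1 ≤ b ^ r := Nat.one_le_pow _ _ (by omega)
    have h4 : 1 ≤ b ^ (r + 1) := Nat.one_le_pow _ _ (by omega)
    zify [h1, h4, hb]
    rw [pow_succ]
    ring

private theorem myParity (b r : ℕ) (hb : 2 ≤ b) (hodd : Odd b) :
    (b ^ r - 1) / (b - 1) % 2 = r % 2 := by
  have hs : (b ^ r - 1) / (b - 1) = ∑ i ∈ Finset.range r, b ^ i := by
    rw [← myGeom b (by omega) r, Nat.mul_div_cancel_left _ (by omega : 0 < b - 1)]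
  rw [hs]
  clear hs
  induction r with
  | zero => simp
  | succ r ih =>
    rw [Finset.sum_range_succ]
    have hbo : b ^ r % 2 = 1 := Nat.odd_iff.mp (hodd.pow)
    omega

theorem stmt7 (p n k : ℕ) (hp : p.Prime) (hn : 0 < n) (hk : 0 < k)
    (F : Type*) [Field F] [Fintype F] (hcard : Fintype.card F = p ^ n)
    (γ : F) (hγ : γ ≠ 0) (e : ℕ) (he : e = Nat.gcd n (2 * k)) :
    Function.Bijective (fun x : F => x ^ (p ^ (2 * k)) + γ * x) ↔
      (-1 : F) ^ (n / e) * γ ^ ((p ^ n - 1) / (p ^ e - 1)) ≠ 1 := by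
  classical
  haveI : Fact p.Prime := ⟨hp⟩
  have hp2 : 2 ≤ p := hp.two_le
  -- characteristic
  haveI hch : CharP F p := by
    haveI := ringChar.charP F
    have hrc : (ringChar F).Prime := CharP.char_is_prime F (ringChar F)
    obtain ⟨n', hn', hcard'⟩ := FiniteField.card F (ringChar F)
    have : p = ringChar F := by
      have heq : p ^ n = (ringChar F) ^ (n' : ℕ) := by rw [← hcard, hcard']
      have hdvd : p ∣ (ringChar F) ^ (n' : ℕ) := heq ▸ dvd_pow_self p hn.ne'
      exact ((Nat.prime_dvd_prime_iff_eq hp hrc).mp (hp.dvd_of_dvd_pow hdvd))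
    rw [this]
    exact ringChar.charP F
  haveI : ExpChar F p := ExpChar.prime hp
  set M := p ^ (2 * k) with hM
  have hM1 : 1 < M := Nat.one_lt_pow (by omega) hp2
  -- e properties
  have he0 : 0 < e := by rw [he]; exact Nat.gcd_pos_of_pos_left _ hn
  have hen : e ∣ n := by rw [he]; exact Nat.gcd_dvd_left _ _
  set s := (p ^ n - 1) / (p ^ e - 1) with hs
  -- the additive map
  let φ : F →+ F :=
    { toFun := fun x => x ^ M + γ * x
      map_zero' := by simp [zero_pow (by omega : M ≠ 0)]
      map_add' := by
        intro x y
        simp only [hM]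
        rw [add_pow_char_pow]
        ring }
  have hφ : (fun x : F => x ^ M + γ * x) = ⇑φ := rfl
  -- units stuff
  have hneg : (-γ : F) ≠ 0 := neg_ne_zero.mpr hγ
  set cu : Fˣ := Units.mk0 (-γ) hneg with hcu
  have hcardu : Fintype.card Fˣ = p ^ n - 1 := by
    rw [Fintype.card_units, hcard]
  have hgcd : Nat.gcd (M - 1) (Fintype.card Fˣ) = p ^ e - 1 := by
    rw [hcardu, hM, myGcdPow p hp2 (2 * k) n, Nat.gcd_comm (2 * k) n, ← he]
  have hstep3 : (∃ u : Fˣ, u ^ (M - 1) = cu) ↔ cu ^ s = 1 := by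
    rw [myCyclicPow (M - 1) (by omega) cu, hgcd, hcardu]
  -- step 1 : bijective iff trivial kernel
  have hstep1 : Function.Bijective (fun x : F => x ^ M + γ * x) ↔
      ∀ x : F, x ^ M + γ * x = 0 → x = 0 := by
    rw [hφ, ← Finite.injective_iff_bijective]
    exact injective_iff_map_eq_zero φ
  -- step 2 : trivial kernel iff no unit solution
  have hstep2 : (∀ x : F, x ^ M + γ * x = 0 → x = 0) ↔ ¬ (∃ u : Fˣ, u ^ (M - 1) = cu) := by
    constructor
    · rintro h ⟨u, hu⟩
      have hux : ((u : F)) ^ (M - 1) = -γ := by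
        have := congrArg (Units.val) hu
        simpa [hcu] using this
      have hu0 : (u : F) ≠ 0 := Units.ne_zero u
      have : (u : F) ^ M + γ * (u : F) = 0 := by
        have hMM : M = (M - 1) + 1 := by omega
        rw [hMM, pow_succ, hux]
        ring
      exact hu0 (h _ this)
    · intro h x hx
      by_contra hx0
      apply h
      refine ⟨Units.mk0 x hx0, ?_⟩
      apply Units.ext
      rw [Units.val_pow_eq_pow_val, Units.val_mk0, hcu, Units.val_mk0]
      have hMM : M = (M - 1) + 1 := by omega
      rw [hMM, pow_succ] at hx
      have : (x ^ (M - 1) + γ) * x = 0 := by linear_combination hx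
      rcases mul_eq_zero.mp this with h1 | h2
      · linear_combination h1
      · exact absurd h2 hx0
  -- step 4 : unit equation to field equation
  have hstep4 : cu ^ s = 1 ↔ (-γ : F) ^ s = 1 := by
    rw [Units.ext_iff, Units.val_pow_eq_pow_val, hcu, Units.val_mk0, Units.val_one]
  -- step 5 : sign
  have hsign : ((-1 : F)) ^ s = (-1 : F) ^ (n / e) := by
    rcases hp.eq_two_or_odd' with rfl | hodd
    · haveI : CharP F 2 := hch
      have hneg1 : (-1 : F) = 1 := by
        rw [neg_eq_iff_add_eq_zero]
        have : ((2 : ℕ) : F) = 0 := CharP.cast_eq_zero F 2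
        simpa [one_add_one_eq_two] using this
      rw [hneg1, one_pow, one_pow]
    · have hb2 : 2 ≤ p ^ e := le_trans hp2 (Nat.le_self_pow he0.ne' p)
      have hbodd : Odd (p ^ e) := hodd.pow
      have hpn : p ^ n = (p ^ e) ^ (n / e) := by
        rw [← pow_mul, Nat.mul_div_cancel' hen]
      have hpar : s % 2 = (n / e) % 2 := by
        rw [hs, hpn]
        exact myParity (p ^ e) (n / e) hb2 hbodd
      rcases Nat.even_or_odd (n / e) with hev | hod
      · have hsev : Even s := Nat.even_iff.mpr (by rw [hpar]; exact Nat.even_iff.mp hev)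
        rw [hsev.neg_one_pow, hev.neg_one_pow]
      · have hsod : Odd s := Nat.odd_iff.mpr (by rw [hpar]; exact Nat.odd_iff.mp hod)
        rw [hsod.neg_one_pow, hod.neg_one_pow]
  have hfinal : (-γ : F) ^ s = (-1 : F) ^ (n / e) * γ ^ s := by
    rw [neg_pow, hsign]
  rw [hstep1, hstep2, hstep3, hstep4, hfinal]
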